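/- The universal enveloping algebras U(L) and U(L') are isomorphic as associative 𝕜-algebras, although L and L' are not isomorphic as Lie algebras. -/

import Mathlib

universe u v w

open Module

/-- `b` is a basis of the Lie algebra `L` of the paper: `Sum.inl i ↦ x_{i+1}`
(for `i : Fin k`), `Sum.inr 0 ↦ D_0`, `Sum.inr 1 ↦ D`, where `D_0` is central, the `x_i`
commute, `[D, x_i] = x_i` for `i = 1, …, k-2`, `[D, x_{k-1}] = x_k` and `[D, x_k] = 0`. -/
def IsLBasis {𝕜 : Type u} [Field 𝕜] {L : Type v} [LieRing L] [LieAlgebra 𝕜 L]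
    {k : ℕ} (b : Basis (Fin k ⊕ Fin 2) 𝕜 L) : Prop :=
  (∀ i j : Fin k, ⁅b (Sum.inl i), b (Sum.inl j)⁆ = 0) ∧
  (∀ v : Fin k ⊕ Fin 2, ⁅b (Sum.inr 0), b v⁆ = 0) ∧
  (∀ i : Fin k, (i : ℕ) < k - 2 → ⁅b (Sum.inr 1), b (Sum.inl i)⁆ = b (Sum.inl i)) ∧
  (∀ i j : Fin k, (i : ℕ) = k - 2 → (j : ℕ) = k - 1 →
      ⁅b (Sum.inr 1), b (Sum.inl i)⁆ = b (Sum.inl j)) ∧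
  (∀ i : Fin k, (i : ℕ) = k - 1 → ⁅b (Sum.inr 1), b (Sum.inl i)⁆ = 0)

/-- `b` is a basis of the Lie algebra `L'` of the paper: `Sum.inl i ↦ x_{i+1}`
(for `i : Fin k`), `Sum.inr 0 ↦ D`, `Sum.inr 1 ↦ D'`, where the `x_i` commute,
`[D, D'] = 0`, `[D, x_i] = [D', x_i] = x_i` for `i = 1, …, k-2`, `[D, x_{k-1}] = x_k`,
`[D', x_{k-1}] = 0` and `[D, x_k] = [D', x_k] = 0`. -/
def IsL'Basis {𝕜 : Type u} [Field 𝕜] {L' : Type v} [LieRing L'] [LieAlgebra 𝕜 L']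
    {k : ℕ} (b : Basis (Fin k ⊕ Fin 2) 𝕜 L') : Prop :=
  (∀ i j : Fin k, ⁅b (Sum.inl i), b (Sum.inl j)⁆ = 0) ∧
  (⁅b (Sum.inr 0), b (Sum.inr 1)⁆ = 0) ∧
  (∀ i : Fin k, (i : ℕ) < k - 2 →
      ⁅b (Sum.inr 0), b (Sum.inl i)⁆ = b (Sum.inl i) ∧
      ⁅b (Sum.inr 1), b (Sum.inl i)⁆ = b (Sum.inl i)) ∧
  (∀ i j : Fin k, (i : ℕ) = k - 2 → (j : ℕ) = k - 1 →
      ⁅b (Sum.inr 0), b (Sum.inl i)⁆ = b (Sum.inl j) ∧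
      ⁅b (Sum.inr 1), b (Sum.inl i)⁆ = 0) ∧
  (∀ i : Fin k, (i : ℕ) = k - 1 →
      ⁅b (Sum.inr 0), b (Sum.inl i)⁆ = 0 ∧ ⁅b (Sum.inr 1), b (Sum.inl i)⁆ = 0)

/-!
In characteristic `p`, `ad (D ^ p) = (ad D) ^ p`. Since `ad D` fixes `x_1, …, x_{k-2}` and acts
on `x_{k-1}, x_k` as a nilpotent Jordan block, `ad (D ^ p)` fixes `x_1, …, x_{k-2}` and kills
`x_{k-1}, x_k`: it acts on the `x_i` exactly as `ad D'` does in `L'`. Hence in `U(L')` the element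
`D ^ p - D'` commutes with all generators and can play the role of `D_0`, and in `U(L)` the
element `D ^ p - D_0` can play the role of `D'`; the two algebra maps so obtained are mutually
inverse. The Lie algebras themselves are told apart by their centers, which contain the plane
spanned by `D_0` and `x_k` in `L` but only the line through `x_k` in `L'`.
-/

attribute [local instance] LieRing.ofAssociativeRing

section Frobenius

variable {R A : Type*} [CommRing R] [Ring A] [Algebra R A] (p : ℕ) [Fact p.Prime] [CharP A p]

theorem LieAlgebra.ad_pow_char (a : A) :
    LieAlgebra.ad R A (a ^ p) = LieAlgebra.ad R A a ^ p := by
  have : CharP (Module.End R A) p :=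
    charP_of_injective_ringHom (Algebra.lmul_injective (R := R) (A := A)) p
  rw [LieAlgebra.ad_eq_lmul_left_sub_lmul_right, Pi.sub_apply, Pi.sub_apply,
    sub_pow_char_of_commute (p := p) (LinearMap.commute_mulLeft_right a a),
    LinearMap.pow_mulLeft, LinearMap.pow_mulRight]

variable {p}

theorem lie_pow_char_of_lie_eq_self {a x : A} (h : ⁅a, x⁆ = x) : ⁅a ^ p, x⁆ = x := by
  rw [← LieAlgebra.ad_apply ℤ, LieAlgebra.ad_pow_char, Module.End.pow_apply]
  exact Function.iterate_fixed h p

theorem lie_pow_char_of_lie_lie_eq_zero {a x : A} (h : ⁅a, ⁅a, x⁆⁆ = 0) : ⁅a ^ p, x⁆ = 0 := by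
  rw [← LieAlgebra.ad_apply ℤ, LieAlgebra.ad_pow_char,
    ← Nat.sub_add_cancel (Fact.out : p.Prime).two_le, pow_add, Module.End.mul_apply, sq,
    Module.End.mul_apply, LieAlgebra.ad_apply, LieAlgebra.ad_apply, h, map_zero]

end Frobenius

section LieHomOfBasis

variable {R L M ι κ : Type*} [CommRing R] [LieRing L] [LieAlgebra R L] [LieRing M]
  [LieAlgebra R M]

theorem Module.Basis.exists_lieHom (b : Basis ι R L) (F : ι → M)
    (h : ∀ i j, b.constr R F ⁅b i, b j⁆ = ⁅F i, F j⁆) :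
    ∃ f : L →ₗ⁅R⁆ M, ∀ i, f (b i) = F i := by
  set f := b.constr R F
  have hlie : (LieAlgebra.ad R L : L →ₗ[R] Module.End R L).compr₂ f =
      (LieAlgebra.ad R M : M →ₗ[R] Module.End R M).compl₁₂ f f :=
    LinearMap.ext_basis b b fun i j => by simpa [f] using h i j
  exact ⟨{ f with map_lie' := fun {x y} => LinearMap.congr_fun₂ hlie x y }, b.constr_basis R F⟩

theorem Module.Basis.exists_lieHom_of_sum (b : Basis (ι ⊕ κ) R L) (F : ι ⊕ κ → M)
    (hinl : ∀ i j, b.constr R F ⁅b (.inl i), b (.inl j)⁆ = ⁅F (.inl i), F (.inl j)⁆)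
    (hinr : ∀ r u, b.constr R F ⁅b (.inr r), b u⁆ = ⁅F (.inr r), F u⁆) :
    ∃ f : L →ₗ⁅R⁆ M, ∀ u, f (b u) = F u := by
  refine b.exists_lieHom F ?_
  rintro (i | r) u
  · rcases u with j | r
    · exact hinl i j
    · rw [← lie_skew, map_neg, hinr, lie_skew]
  · exact hinr r u

end LieHomOfBasis

namespace UniversalEnvelopingAlgebra

variable {R L : Type*} [CommRing R] [LieRing L] [LieAlgebra R L]

theorem algHom_ext_basis {A κ : Type*} [Ring A] [Algebra R A] (b : Basis κ R L)
    {g₁ g₂ : UniversalEnvelopingAlgebra R L →ₐ[R] A}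
    (h : ∀ i, g₁ (ι R (b i)) = g₂ (ι R (b i))) : g₁ = g₂ := by
  ext x
  exact LinearMap.congr_fun (b.ext (f₁ := g₁.toLinearMap ∘ₗ (ι R : L →ₗ⁅R⁆ _).toLinearMap)
    (f₂ := g₂.toLinearMap ∘ₗ (ι R : L →ₗ⁅R⁆ _).toLinearMap) h) x

theorem algebraMap_injective : Function.Injective (algebraMap R (UniversalEnvelopingAlgebra R L)) :=
  fun a c h => by simpa using congrArg (lift R (0 : L →ₗ⁅R⁆ R)) h

instance charP (p : ℕ) [CharP R p] : CharP (UniversalEnvelopingAlgebra R L) p :=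
  charP_of_injective_algebraMap algebraMap_injective p

end UniversalEnvelopingAlgebra

section LinearAlgebra

theorem Module.Basis.apply_eq_sum_of_apply_eq_zero {R M N ι : Type*} [CommSemiring R]
    [AddCommMonoid M] [Module R M] [AddCommMonoid N] [Module R N] [Fintype ι] (b : Basis ι R M)
    (f : M →ₗ[R] N) {s : Finset ι} (hs : ∀ u ∉ s, f (b u) = 0) (z : M) :
    f z = ∑ u ∈ s, b.repr z u • f (b u) := by
  conv_lhs => rw [← b.sum_repr z]
  rw [map_sum]
  simp_rw [map_smul]
  exact (Finset.sum_subset (Finset.subset_univ s) fun u _ hu => by rw [hs u hu, smul_zero]).symm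

theorem Module.Basis.lie_eq_zero_of_forall_lie_eq_zero {R L ι : Type*} [CommRing R] [LieRing L]
    [LieAlgebra R L] (b : Basis ι R L) {z : L} (h : ∀ u, ⁅b u, z⁆ = 0) (w : L) : ⁅w, z⁆ = 0 :=
  LinearMap.congr_fun (b.ext (f₁ := (LieAlgebra.ad R L : L →ₗ[R] Module.End R L).flip z)
    (f₂ := 0) h) w

theorem LinearIndependent.eq_of_mem_span_singleton {K V ι : Type*} [Field K] [AddCommGroup V]
    [Module K V] {f : ι → V} (hf : LinearIndependent K f) {v : V} {i j : ι}
    (hi : f i ∈ K ∙ v) (hj : f j ∈ K ∙ v) : i = j := by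
  obtain ⟨a, ha⟩ := Submodule.mem_span_singleton.mp hi
  obtain ⟨c, hc⟩ := Submodule.mem_span_singleton.mp hj
  by_contra hij
  obtain ⟨-, ha0⟩ := (LinearIndepOn.pair_iff f hij).mp (hf.linearIndepOn _) c (-a) (by
    rw [← ha, ← hc, smul_smul, smul_smul, ← add_smul, neg_mul, mul_comm, add_neg_cancel,
      zero_smul])
  exact hf.ne_zero i (by rw [← ha, neg_eq_zero.mp ha0, zero_smul])

end LinearAlgebra

section Relations

variable {M N : Type*} [LieRing M] [LieRing N] {k : ℕ}

structure ActsLikeD (X : Fin k → M) (E : M) : Prop where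
  lie_of_lt : ∀ i : Fin k, (i : ℕ) < k - 2 → ⁅E, X i⁆ = X i
  lie_of_eq_sub_two : ∀ i j : Fin k, (i : ℕ) = k - 2 → (j : ℕ) = k - 1 → ⁅E, X i⁆ = X j
  lie_of_eq_sub_one : ∀ i : Fin k, (i : ℕ) = k - 1 → ⁅E, X i⁆ = 0

structure ActsLikeD' (X : Fin k → M) (E' : M) : Prop where
  lie_of_lt : ∀ i : Fin k, (i : ℕ) < k - 2 → ⁅E', X i⁆ = X i
  lie_of_ge : ∀ i : Fin k, k - 2 ≤ (i : ℕ) → ⁅E', X i⁆ = 0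

/-- The relations of `L` for the assignment `x_i ↦ X i`, `D_0 ↦ Z`, `D ↦ E`. -/
structure IsLFamily (X : Fin k → M) (Z E : M) : Prop where
  lie_X_X : ∀ i j, ⁅X i, X j⁆ = 0
  actsLikeD : ActsLikeD X E
  lie_Z_X : ∀ i, ⁅Z, X i⁆ = 0
  lie_Z_E : ⁅Z, E⁆ = 0

/-- The relations of `L'` for the assignment `x_i ↦ X i`, `D ↦ E`, `D' ↦ E'`. -/
structure IsL'Family (X : Fin k → M) (E E' : M) : Prop where
  lie_X_X : ∀ i j, ⁅X i, X j⁆ = 0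
  actsLikeD : ActsLikeD X E
  actsLikeD' : ActsLikeD' X E'
  lie_E_E' : ⁅E, E'⁆ = 0

theorem ActsLikeD.lie_lie_eq_zero {X : Fin k → M} {E : M} (h : ActsLikeD X E) {i : Fin k}
    (hi : k - 2 ≤ (i : ℕ)) : ⁅E, ⁅E, X i⁆⁆ = 0 := by
  obtain hi | hi : (i : ℕ) = k - 2 ∨ (i : ℕ) = k - 1 := by omega
  · rw [h.lie_of_eq_sub_two i ⟨k - 1, by omega⟩ hi rfl, h.lie_of_eq_sub_one _ rfl]
  · rw [h.lie_of_eq_sub_one i hi, lie_zero]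

theorem ActsLikeD'.lie_sub_eq_zero {X : Fin k → M} {E₁ E₂ : M} (h₁ : ActsLikeD' X E₁)
    (h₂ : ActsLikeD' X E₂) (i : Fin k) : ⁅E₁ - E₂, X i⁆ = 0 := by
  rw [sub_lie, sub_eq_zero]
  rcases lt_or_ge (i : ℕ) (k - 2) with hi | hi
  · rw [h₁.lie_of_lt i hi, h₂.lie_of_lt i hi]
  · rw [h₁.lie_of_ge i hi, h₂.lie_of_ge i hi]

theorem ActsLikeD'.sub {X : Fin k → M} {E' Z : M} (h : ActsLikeD' X E')
    (hZ : ∀ i, ⁅Z, X i⁆ = 0) : ActsLikeD' X (E' - Z) where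
  lie_of_lt i hi := by rw [sub_lie, hZ, sub_zero, h.lie_of_lt i hi]
  lie_of_ge i hi := by rw [sub_lie, hZ, sub_zero, h.lie_of_ge i hi]

section Transfer

variable {R : Type*} [CommRing R] [LieAlgebra R M] [LieAlgebra R N]

theorem ActsLikeD.map {X : Fin k → M} {E : M} (h : ActsLikeD X E) (f : M →ₗ⁅R⁆ N) :
    ActsLikeD (f ∘ X) (f E) where
  lie_of_lt i hi := by rw [Function.comp_apply, ← f.map_lie, h.lie_of_lt i hi]
  lie_of_eq_sub_two i j hi hj := by
    rw [Function.comp_apply, ← f.map_lie, h.lie_of_eq_sub_two i j hi hj, Function.comp_apply]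
  lie_of_eq_sub_one i hi := by rw [Function.comp_apply, ← f.map_lie, h.lie_of_eq_sub_one i hi,
    map_zero]

theorem ActsLikeD'.map {X : Fin k → M} {E' : M} (h : ActsLikeD' X E') (f : M →ₗ⁅R⁆ N) :
    ActsLikeD' (f ∘ X) (f E') where
  lie_of_lt i hi := by rw [Function.comp_apply, ← f.map_lie, h.lie_of_lt i hi]
  lie_of_ge i hi := by rw [Function.comp_apply, ← f.map_lie, h.lie_of_ge i hi, map_zero]

theorem IsLFamily.map {X : Fin k → M} {Z E : M} (h : IsLFamily X Z E) (f : M →ₗ⁅R⁆ N) :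
    IsLFamily (f ∘ X) (f Z) (f E) where
  lie_X_X i j := by simp only [Function.comp_apply, ← f.map_lie, h.lie_X_X, map_zero]
  actsLikeD := h.actsLikeD.map f
  lie_Z_X i := by rw [Function.comp_apply, ← f.map_lie, h.lie_Z_X, map_zero]
  lie_Z_E := by rw [← f.map_lie, h.lie_Z_E, map_zero]

theorem IsL'Family.map {X : Fin k → M} {E E' : M} (h : IsL'Family X E E') (f : M →ₗ⁅R⁆ N) :
    IsL'Family (f ∘ X) (f E) (f E') where
  lie_X_X i j := by simp only [Function.comp_apply, ← f.map_lie, h.lie_X_X, map_zero]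
  actsLikeD := h.actsLikeD.map f
  actsLikeD' := h.actsLikeD'.map f
  lie_E_E' := by rw [← f.map_lie, h.lie_E_E', map_zero]

theorem ActsLikeD.map_lie {X : Fin k → M} {E : M} {Y : Fin k → N} {F : N}
    (hX : ActsLikeD X E) (hY : ActsLikeD Y F) (f : M →ₗ[R] N) (hf : ∀ i, f (X i) = Y i)
    (i : Fin k) : f ⁅E, X i⁆ = ⁅F, Y i⁆ := by
  obtain hi | hi | hi : (i : ℕ) < k - 2 ∨ (i : ℕ) = k - 2 ∨ (i : ℕ) = k - 1 := by omega
  · rw [hX.lie_of_lt i hi, hY.lie_of_lt i hi, hf]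
  · rw [hX.lie_of_eq_sub_two i ⟨k - 1, by omega⟩ hi rfl,
      hY.lie_of_eq_sub_two i ⟨k - 1, by omega⟩ hi rfl, hf]
  · rw [hX.lie_of_eq_sub_one i hi, hY.lie_of_eq_sub_one i hi, map_zero]

theorem ActsLikeD'.map_lie {X : Fin k → M} {E' : M} {Y : Fin k → N} {F' : N}
    (hX : ActsLikeD' X E') (hY : ActsLikeD' Y F') (f : M →ₗ[R] N) (hf : ∀ i, f (X i) = Y i)
    (i : Fin k) : f ⁅E', X i⁆ = ⁅F', Y i⁆ := by
  rcases lt_or_ge (i : ℕ) (k - 2) with hi | hi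
  · rw [hX.lie_of_lt i hi, hY.lie_of_lt i hi, hf]
  · rw [hX.lie_of_ge i hi, hY.lie_of_ge i hi, map_zero]

end Transfer

end Relations

section PowChar

variable {A : Type*} [Ring A] {p : ℕ} [Fact p.Prime] [CharP A p] {k : ℕ} {X : Fin k → A}

theorem ActsLikeD.actsLikeD'_pow {E : A} (h : ActsLikeD X E) : ActsLikeD' X (E ^ p) where
  lie_of_lt i hi := lie_pow_char_of_lie_eq_self (h.lie_of_lt i hi)
  lie_of_ge _ hi := lie_pow_char_of_lie_lie_eq_zero (h.lie_lie_eq_zero hi)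

theorem lie_pow_self (E : A) (n : ℕ) : ⁅E ^ n, E⁆ = 0 := by
  rw [Ring.lie_def, sub_eq_zero]
  exact ((Commute.refl E).pow_left n).eq

variable (p)

theorem IsL'Family.isLFamily_pow_sub {E E' : A} (h : IsL'Family X E E') :
    IsLFamily X (E ^ p - E') E where
  lie_X_X := h.lie_X_X
  actsLikeD := h.actsLikeD
  lie_Z_X := h.actsLikeD.actsLikeD'_pow.lie_sub_eq_zero h.actsLikeD'
  lie_Z_E := by rw [sub_lie, lie_pow_self, ← lie_skew, h.lie_E_E', neg_zero, sub_zero]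

theorem IsLFamily.isL'Family_pow_sub {Z E : A} (h : IsLFamily X Z E) :
    IsL'Family X E (E ^ p - Z) where
  lie_X_X := h.lie_X_X
  actsLikeD := h.actsLikeD
  actsLikeD' := h.actsLikeD.actsLikeD'_pow.sub h.lie_Z_X
  lie_E_E' := by rw [lie_sub, ← lie_skew, lie_pow_self, ← lie_skew, h.lie_Z_E, neg_zero, sub_zero]

end PowChar

section Bases

variable {𝕜 L L' M : Type*} [Field 𝕜] [LieRing L] [LieAlgebra 𝕜 L] [LieRing L'] [LieAlgebra 𝕜 L']
  [LieRing M] [LieAlgebra 𝕜 M] {k : ℕ}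

theorem IsLBasis.isLFamily {b : Basis (Fin k ⊕ Fin 2) 𝕜 L} (hb : IsLBasis b) :
    IsLFamily (fun i => b (.inl i)) (b (.inr 0)) (b (.inr 1)) where
  lie_X_X := hb.1
  actsLikeD := ⟨hb.2.2.1, hb.2.2.2.1, hb.2.2.2.2⟩
  lie_Z_X i := hb.2.1 (.inl i)
  lie_Z_E := hb.2.1 (.inr 1)

theorem IsL'Basis.isL'Family {b : Basis (Fin k ⊕ Fin 2) 𝕜 L'} (hb : IsL'Basis b) :
    IsL'Family (fun i => b (.inl i)) (b (.inr 0)) (b (.inr 1)) where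
  lie_X_X := hb.1
  actsLikeD := ⟨fun i hi => (hb.2.2.1 i hi).1, fun i j hi hj => (hb.2.2.2.1 i j hi hj).1,
    fun i hi => (hb.2.2.2.2 i hi).1⟩
  actsLikeD' := ⟨fun i hi => (hb.2.2.1 i hi).2, fun i hi => by
    obtain hi | hi : (i : ℕ) = k - 2 ∨ (i : ℕ) = k - 1 := by omega
    · exact (hb.2.2.2.1 i ⟨k - 1, by omega⟩ hi rfl).2
    · exact (hb.2.2.2.2 i hi).2⟩
  lie_E_E' := hb.2.1

theorem IsLBasis.exists_lieHom {b : Basis (Fin k ⊕ Fin 2) 𝕜 L} (hb : IsLBasis b)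
    {X : Fin k → M} {Z E : M} (h : IsLFamily X Z E) :
    ∃ f : L →ₗ⁅𝕜⁆ M, ∀ u, f (b u) = Sum.elim X ![Z, E] u := by
  have hF := b.constr_basis 𝕜 (Sum.elim X ![Z, E])
  have hL := hb.isLFamily
  have hZ : ∀ u, ⁅Z, Sum.elim X ![Z, E] u⁆ = 0 :=
    Sum.forall.mpr ⟨h.lie_Z_X, Fin.forall_fin_two.mpr ⟨lie_self Z, h.lie_Z_E⟩⟩
  refine b.exists_lieHom_of_sum _ (fun i j => ?_) (Fin.forall_fin_two.mpr ⟨fun u => ?_,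
    Sum.forall.mpr ⟨fun i => ?_, Fin.forall_fin_two.mpr ⟨?_, ?_⟩⟩⟩)
  · rw [hL.lie_X_X, map_zero]
    exact (h.lie_X_X i j).symm
  · rw [hb.2.1 u, map_zero]
    exact (hZ u).symm
  · exact hL.actsLikeD.map_lie h.actsLikeD _ (fun i => hF (.inl i)) i
  · rw [← lie_skew, hL.lie_Z_E, neg_zero, map_zero, ← lie_skew]
    exact (neg_eq_zero.mpr h.lie_Z_E).symm
  · rw [lie_self, map_zero]
    exact (lie_self E).symm

theorem IsL'Basis.exists_lieHom {b : Basis (Fin k ⊕ Fin 2) 𝕜 L'} (hb : IsL'Basis b)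
    {X : Fin k → M} {E E' : M} (h : IsL'Family X E E') :
    ∃ f : L' →ₗ⁅𝕜⁆ M, ∀ u, f (b u) = Sum.elim X ![E, E'] u := by
  have hF := b.constr_basis 𝕜 (Sum.elim X ![E, E'])
  have hL := hb.isL'Family
  refine b.exists_lieHom_of_sum _ (fun i j => ?_) (Fin.forall_fin_two.mpr ⟨
    Sum.forall.mpr ⟨fun i => ?_, Fin.forall_fin_two.mpr ⟨?_, ?_⟩⟩,
    Sum.forall.mpr ⟨fun i => ?_, Fin.forall_fin_two.mpr ⟨?_, ?_⟩⟩⟩)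
  · rw [hL.lie_X_X, map_zero]
    exact (h.lie_X_X i j).symm
  · exact hL.actsLikeD.map_lie h.actsLikeD _ (fun i => hF (.inl i)) i
  · rw [lie_self, map_zero]
    exact (lie_self E).symm
  · rw [hL.lie_E_E', map_zero]
    exact h.lie_E_E'.symm
  · exact hL.actsLikeD'.map_lie h.actsLikeD' _ (fun i => hF (.inl i)) i
  · rw [← lie_skew, hL.lie_E_E', neg_zero, map_zero, ← lie_skew]
    exact (neg_eq_zero.mpr h.lie_E_E').symm
  · rw [lie_self, map_zero]
    exact (lie_self E').symm

end Bases

section Enveloping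

open UniversalEnvelopingAlgebra

variable {𝕜 L L' : Type*} [Field 𝕜] [LieRing L] [LieAlgebra 𝕜 L] [LieRing L'] [LieAlgebra 𝕜 L']
  {k : ℕ} {b : Basis (Fin k ⊕ Fin 2) 𝕜 L} {b' : Basis (Fin k ⊕ Fin 2) 𝕜 L'}

theorem IsLBasis.exists_algHom {A : Type*} [Ring A] [Algebra 𝕜 A] (hb : IsLBasis b)
    {X : Fin k → A} {Z E : A} (h : IsLFamily X Z E) :
    ∃ Φ : UniversalEnvelopingAlgebra 𝕜 L →ₐ[𝕜] A, ∀ u, Φ (ι 𝕜 (b u)) = Sum.elim X ![Z, E] u := by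
  obtain ⟨f, hf⟩ := hb.exists_lieHom h
  exact ⟨lift 𝕜 f, fun u => by rw [lift_ι_apply, hf]⟩

theorem IsL'Basis.exists_algHom {A : Type*} [Ring A] [Algebra 𝕜 A] (hb' : IsL'Basis b')
    {X : Fin k → A} {E E' : A} (h : IsL'Family X E E') :
    ∃ Ψ : UniversalEnvelopingAlgebra 𝕜 L' →ₐ[𝕜] A, ∀ u, Ψ (ι 𝕜 (b' u)) = Sum.elim X ![E, E'] u := by
  obtain ⟨f, hf⟩ := hb'.exists_lieHom h
  exact ⟨lift 𝕜 f, fun u => by rw [lift_ι_apply, hf]⟩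

theorem IsLBasis.nonempty_algEquiv (p : ℕ) [Fact p.Prime] [CharP 𝕜 p] (hb : IsLBasis b)
    (hb' : IsL'Basis b') :
    Nonempty (UniversalEnvelopingAlgebra 𝕜 L ≃ₐ[𝕜] UniversalEnvelopingAlgebra 𝕜 L') := by
  obtain ⟨Φ, hΦ⟩ := hb.exists_algHom ((hb'.isL'Family.map (ι 𝕜)).isLFamily_pow_sub p)
  obtain ⟨Ψ, hΨ⟩ := hb'.exists_algHom ((hb.isLFamily.map (ι 𝕜)).isL'Family_pow_sub p)
  refine ⟨AlgEquiv.ofAlgHom Φ Ψ (algHom_ext_basis b' ?_) (algHom_ext_basis b ?_)⟩ <;>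
  · refine Sum.forall.mpr ⟨fun i => ?_, Fin.forall_fin_two.mpr ⟨?_, ?_⟩⟩ <;>
    simp only [AlgHom.comp_apply, AlgHom.id_apply, hΦ, hΨ, map_sub, map_pow, Sum.elim_inl,
      Sum.elim_inr, Function.comp_apply, Matrix.cons_val_zero, Matrix.cons_val_one,
      sub_sub_cancel]

end Enveloping

section CenterOfL'

variable {𝕜 L' : Type*} [Field 𝕜] [LieRing L'] [LieAlgebra 𝕜 L'] {k : ℕ}
  {b' : Basis (Fin k ⊕ Fin 2) 𝕜 L'} {z : L'}

theorem IsL'Basis.repr_inr_zero_eq_zero (hk : 0 < k) (hb' : IsL'Basis b')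
    (hz : ∀ w : L', ⁅w, z⁆ = 0) : b'.repr z (.inr 0) = 0 := by
  -- `⁅x_{k-1}, z⁆ = -c x_k`, where `c` is the `D`-coordinate of `z`
  obtain ⟨hxx, -, -, hpen, -⟩ := hb'
  have hpen := hpen ⟨k - 2, by omega⟩ ⟨k - 1, by omega⟩ rfl rfl
  have h := b'.apply_eq_sum_of_apply_eq_zero (LieAlgebra.ad 𝕜 L' (b' (.inl ⟨k - 2, by omega⟩)))
    (s := {.inr 0}) (z := z) (Sum.forall.mpr ⟨fun j _ => hxx _ j, Fin.forall_fin_two.mpr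
      ⟨fun hu => absurd (by simp) hu,
        fun _ => by rw [LieAlgebra.ad_apply, ← lie_skew, hpen.2, neg_zero]⟩⟩)
  rw [LieAlgebra.ad_apply, hz, Finset.sum_singleton, LieAlgebra.ad_apply, ← lie_skew, hpen.1,
    smul_neg, eq_comm, neg_eq_zero, smul_eq_zero] at h
  exact h.resolve_right (b'.ne_zero _)

theorem IsL'Basis.repr_inr_one_eq_zero (hk : 3 ≤ k) (hb' : IsL'Basis b')
    (hz : ∀ w : L', ⁅w, z⁆ = 0) : b'.repr z (.inr 1) = 0 := by
  -- `⁅x_1, z⁆ = -(c + c') x_1`, where `c`, `c'` are the `D`- and `D'`-coordinates of `z`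
  have hD := hb'.repr_inr_zero_eq_zero (by omega) hz
  obtain ⟨hxx, -, hlt, -, -⟩ := hb'
  have hlt := hlt ⟨0, by omega⟩ (by simp only; omega)
  have h := b'.apply_eq_sum_of_apply_eq_zero (LieAlgebra.ad 𝕜 L' (b' (.inl ⟨0, by omega⟩)))
    (s := {.inr 0, .inr 1}) (z := z) (Sum.forall.mpr ⟨fun j _ => hxx _ j,
      Fin.forall_fin_two.mpr ⟨fun hu => absurd (by simp) hu, fun hu => absurd (by simp) hu⟩⟩)
  rw [LieAlgebra.ad_apply, hz, Finset.sum_pair (by simp), hD, zero_smul, zero_add,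
    LieAlgebra.ad_apply, ← lie_skew, hlt.2, smul_neg, eq_comm, neg_eq_zero, smul_eq_zero] at h
  exact h.resolve_right (b'.ne_zero _)

theorem IsL'Basis.repr_inl_eq_zero_of_eq_sub_two (hb' : IsL'Basis b')
    (hz : ∀ w : L', ⁅w, z⁆ = 0) {i : Fin k} (hi : (i : ℕ) = k - 2) : b'.repr z (.inl i) = 0 := by
  -- `⁅D - D', z⁆ = c x_k`, where `c` is the `x_{k-1}`-coordinate of `z`
  obtain ⟨-, hDD', hlt, hpen, hlast⟩ := hb'
  have hpen := hpen i ⟨k - 1, by omega⟩ hi rfl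
  have h := b'.apply_eq_sum_of_apply_eq_zero (LieAlgebra.ad 𝕜 L' (b' (.inr 0) - b' (.inr 1)))
    (s := {.inl i}) (z := z) (Sum.forall.mpr
      ⟨fun j hj => ?_, Fin.forall_fin_two.mpr ⟨fun _ => ?_, fun _ => ?_⟩⟩)
  · rw [LieAlgebra.ad_apply, hz, Finset.sum_singleton, LieAlgebra.ad_apply, sub_lie, hpen.1,
      hpen.2, sub_zero, eq_comm, smul_eq_zero] at h
    exact h.resolve_right (b'.ne_zero _)
  · rw [LieAlgebra.ad_apply, sub_lie]
    obtain hj' | hj' | hj' : (j : ℕ) < k - 2 ∨ (j : ℕ) = k - 2 ∨ (j : ℕ) = k - 1 := by omega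
    · rw [(hlt j hj').1, (hlt j hj').2, sub_self]
    · exact absurd (Finset.mem_singleton.mpr (congrArg Sum.inl (Fin.ext (hj'.trans hi.symm)))) hj
    · rw [(hlast j hj').1, (hlast j hj').2, sub_zero]
  · rw [LieAlgebra.ad_apply, sub_lie, lie_self, ← lie_skew, hDD', neg_zero, sub_zero]
  · rw [LieAlgebra.ad_apply, sub_lie, hDD', lie_self, sub_zero]

theorem IsL'Basis.repr_inl_eq_zero_of_lt (hb' : IsL'Basis b')
    (hz : ∀ w : L', ⁅w, z⁆ = 0) {i : Fin k} (hi : (i : ℕ) < k - 2) : b'.repr z (.inl i) = 0 := by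
  -- `ad D'` is the projection onto the span of `x_1, …, x_{k-2}`
  obtain ⟨-, hDD', hlt, hpen, hlast⟩ := hb'
  have h := b'.apply_eq_sum_of_apply_eq_zero
    (b'.coord (.inl i) ∘ₗ LieAlgebra.ad 𝕜 L' (b' (.inr 1))) (s := {.inl i}) (z := z)
    (Sum.forall.mpr ⟨fun j hj => ?_, Fin.forall_fin_two.mpr ⟨fun _ => ?_, fun _ => ?_⟩⟩)
  · rw [LinearMap.comp_apply, LieAlgebra.ad_apply, hz, map_zero, Finset.sum_singleton,
      LinearMap.comp_apply, LieAlgebra.ad_apply, (hlt i hi).2, b'.coord_apply, b'.repr_self,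
      Finsupp.single_eq_same, smul_eq_mul, mul_one] at h
    exact h.symm
  · rw [LinearMap.comp_apply, LieAlgebra.ad_apply]
    obtain hj' | hj' | hj' : (j : ℕ) < k - 2 ∨ (j : ℕ) = k - 2 ∨ (j : ℕ) = k - 1 := by omega
    · rw [(hlt j hj').2, b'.coord_apply, b'.repr_self,
        Finsupp.single_eq_of_ne' (Finset.notMem_singleton.mp hj)]
    · rw [(hpen j ⟨k - 1, by omega⟩ hj' rfl).2, map_zero]
    · rw [(hlast j hj').2, map_zero]
  · rw [LinearMap.comp_apply, LieAlgebra.ad_apply, ← lie_skew, hDD', neg_zero, map_zero]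
  · rw [LinearMap.comp_apply, LieAlgebra.ad_apply, lie_self, map_zero]

theorem IsL'Basis.mem_span_of_forall_lie_eq_zero (hk : 3 ≤ k) (hb' : IsL'Basis b')
    (hz : ∀ w : L', ⁅w, z⁆ = 0) : z ∈ 𝕜 ∙ b' (.inl ⟨k - 1, by omega⟩) := by
  have hvanish : ∀ u, u ≠ .inl ⟨k - 1, by omega⟩ → b'.repr z u • b' u = 0 := by
    refine Sum.forall.mpr ⟨fun j hj => ?_, Fin.forall_fin_two.mpr
      ⟨fun _ => by rw [hb'.repr_inr_zero_eq_zero (by omega) hz, zero_smul],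
        fun _ => by rw [hb'.repr_inr_one_eq_zero hk hz, zero_smul]⟩⟩
    obtain hj' | hj' | hj' : (j : ℕ) < k - 2 ∨ (j : ℕ) = k - 2 ∨ (j : ℕ) = k - 1 := by omega
    · rw [hb'.repr_inl_eq_zero_of_lt hz hj', zero_smul]
    · rw [hb'.repr_inl_eq_zero_of_eq_sub_two hz hj', zero_smul]
    · exact absurd (congrArg Sum.inl (Fin.ext hj')) hj
  rw [Submodule.mem_span_singleton]
  exact ⟨_, (Fintype.sum_eq_single _ hvanish).symm.trans (b'.sum_repr z)⟩

end CenterOfL'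

section NonIsomorphism

variable {𝕜 L L' : Type*} [Field 𝕜] [LieRing L] [LieAlgebra 𝕜 L] [LieRing L'] [LieAlgebra 𝕜 L']
  {k : ℕ}

theorem IsLBasis.isEmpty_lieEquiv (hk : 3 ≤ k) {b : Basis (Fin k ⊕ Fin 2) 𝕜 L} (hb : IsLBasis b)
    {b' : Basis (Fin k ⊕ Fin 2) 𝕜 L'} (hb' : IsL'Basis b') : IsEmpty (L ≃ₗ⁅𝕜⁆ L') := by
  refine ⟨fun e => ?_⟩
  have central {u} (hu : ∀ v, ⁅b v, b u⁆ = 0) :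
      (b.map e.toLinearEquiv) u ∈ 𝕜 ∙ b' (.inl ⟨k - 1, by omega⟩) :=
    hb'.mem_span_of_forall_lie_eq_zero hk fun w => by
      rw [b.map_apply, ← e.apply_symm_apply w, LieEquiv.coe_toLinearEquiv, ← e.map_lie,
        b.lie_eq_zero_of_forall_lie_eq_zero hu, map_zero]
  have hD₀ := central (u := .inr 0) fun v => by rw [← lie_skew, hb.2.1 v, neg_zero]
  have hx := central (u := .inl ⟨k - 1, by omega⟩) (Sum.forall.mpr ⟨fun j => hb.1 j _,
    Fin.forall_fin_two.mpr ⟨hb.2.1 _, hb.2.2.2.2 _ rfl⟩⟩)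
  exact Sum.inr_ne_inl ((b.map e.toLinearEquiv).linearIndependent.eq_of_mem_span_singleton hD₀ hx)

end NonIsomorphism

theorem stmt17 (p k : ℕ) (hp : p.Prime) (hk : 3 ≤ k)
    (𝕜 : Type u) [Field 𝕜] [CharP 𝕜 p]
    (L : Type v) [LieRing L] [LieAlgebra 𝕜 L]
    (L' : Type v) [LieRing L'] [LieAlgebra 𝕜 L']
    (b : Basis (Fin k ⊕ Fin 2) 𝕜 L) (hb : IsLBasis b)
    (b' : Basis (Fin k ⊕ Fin 2) 𝕜 L') (hb' : IsL'Basis b') :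
    Nonempty (UniversalEnvelopingAlgebra 𝕜 L ≃ₐ[𝕜] UniversalEnvelopingAlgebra 𝕜 L') ∧
    IsEmpty (L ≃ₗ⁅𝕜⁆ L') := by
  have : Fact p.Prime := ⟨hp⟩
  exact ⟨hb.nonempty_algEquiv p hb', hb.isEmpty_lieEquiv hk hb'⟩
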